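/- For every μ ∈ [0,1/2] the equilibrium points L₁ = (λ₂^{−1/3},0,0) and L₂ = (−λ₂^{−1/3},0,0) are of saddle × center type in the plane: at L₁ one has Ω_xx = 3λ₂, Ω_yy = λ₁ − λ₂, Ω_xy = 0, and setting A = 4 − 2λ₂ − λ₁, B = 3λ₂(λ₁ − λ₂), D = A² − 4B, one has B < 0 and D > A² ≥ 0, and the planar characteristic polynomial η⁴ − (Ω_xx + Ω_yy − 4)η² + Ω_xx Ω_yy = η⁴ − (2λ₂ + λ₁ − 4)η² + 3λ₂(λ₁ − λ₂) has, over ℂ, exactly the roots {Λ, −Λ, iω, −iω}, where Λ = √((√D − A)/2) > 0 and ω = √((A + √D)/2) > 0. -/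

import Mathlib

/-!
Writing the Kepler term as `(x² + y² + z²)^(-1/2)`, the second derivatives of `Ω` off the origin
are `Ω_xx = λ₂ - r⁻³ + 3x² r⁻⁵`, `Ω_yy = λ₁ - r⁻³ + 3y² r⁻⁵`, `Ω_xy = 3xy r⁻⁵`. On the `x`-axis at
`|x| = λ₂^(-1/3)` one has `r⁻³ = λ₂`, which gives the stated values. Then `B = -9 λ₂ d < 0`, so
the quadratic `t² + A t + B` has one positive root `Λ²` and one negative root `-ω²`, and the
characteristic polynomial factors as `(η - Λ)(η + Λ)(η - iω)(η + iω)`.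
-/


noncomputable section

/-- `d = √(1 − 3μ + 3μ²)`. -/
def dparam (μ : ℝ) : ℝ := Real.sqrt (1 - 3*μ + 3*μ^2)

/-- `λ₂ = (3/2)(1 + d)`. -/
def lam2 (μ : ℝ) : ℝ := (3/2) * (1 + dparam μ)

/-- `λ₁ = (3/2)(1 − d)`. -/
def lam1 (μ : ℝ) : ℝ := (3/2) * (1 - dparam μ)

/-- The effective potential `Ω(x,y,z) = (1/2)(λ₂x² + λ₁y² − z²) + 1/√(x²+y²+z²)`. -/
def Omega (μ x y z : ℝ) : ℝ :=
  (1/2) * (lam2 μ * x^2 + lam1 μ * y^2 - z^2) + 1 / Real.sqrt (x^2 + y^2 + z^2)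

/-- `∂Ω/∂x`. -/
def Omegax (μ x y z : ℝ) : ℝ := deriv (fun s => Omega μ s y z) x

/-- `∂Ω/∂y`. -/
def Omegay (μ x y z : ℝ) : ℝ := deriv (fun s => Omega μ x s z) y

/-- `∂Ω/∂z`. -/
def Omegaz (μ x y z : ℝ) : ℝ := deriv (fun s => Omega μ x y s) z


/-- `Ω_xx`. -/
def Omegaxx (μ x y z : ℝ) : ℝ := deriv (fun s => Omegax μ s y z) x

/-- `Ω_yy`. -/
def Omegayy (μ x y z : ℝ) : ℝ := deriv (fun s => Omegay μ x s z) y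

/-- `Ω_xy`. -/
def Omegaxy (μ x y z : ℝ) : ℝ := deriv (fun s => Omegax μ x s z) y

/-- `A = 4 − 2λ₂ − λ₁`. -/
def Acoef (μ : ℝ) : ℝ := 4 - 2 * lam2 μ - lam1 μ

/-- `B = 3λ₂(λ₁ − λ₂)`. -/
def Bcoef (μ : ℝ) : ℝ := 3 * lam2 μ * (lam1 μ - lam2 μ)

/-- `D = A² − 4B`. -/
def Dcoef (μ : ℝ) : ℝ := (Acoef μ)^2 - 4 * Bcoef μ

/-- `Λ = √((√D − A)/2)`. -/
def LambdaL1 (μ : ℝ) : ℝ := Real.sqrt ((Real.sqrt (Dcoef μ) - Acoef μ) / 2)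

/-- `ω = √((A + √D)/2)`. -/
def omegaL1 (μ : ℝ) : ℝ := Real.sqrt ((Acoef μ + Real.sqrt (Dcoef μ)) / 2)

open Complex Filter Topology

theorem hasDerivAt_sq_add_rpow (c p t : ℝ) (h : t ^ 2 + c ≠ 0) :
    HasDerivAt (fun s => (s ^ 2 + c) ^ p) (2 * p * t * (t ^ 2 + c) ^ (p - 1)) t := by
  convert ((hasDerivAt_pow 2 t).add_const c).rpow_const (p := p) (Or.inl h) using 1
  push_cast; ring

theorem hasDerivAt_mul_sq_add_rpow (c p t : ℝ) (h : t ^ 2 + c ≠ 0) :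
    HasDerivAt (fun s => s * (s ^ 2 + c) ^ p)
      ((t ^ 2 + c) ^ p + 2 * p * t ^ 2 * (t ^ 2 + c) ^ (p - 1)) t := by
  refine (hasDerivAt_id t).mul (hasDerivAt_sq_add_rpow c p t h) |>.congr_deriv ?_
  simp only [id]; ring

theorem eventually_sq_add_pos {c t : ℝ} (h : 0 < t ^ 2 + c) :
    ∀ᶠ s in 𝓝 t, 0 < s ^ 2 + c :=
  (isOpen_lt continuous_const (by fun_prop)).mem_nhds h

theorem Omega_eq_rpow (μ x y z : ℝ) :
    Omega μ x y z = (1/2) * (lam2 μ * x^2 + lam1 μ * y^2 - z^2)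
      + (x^2 + y^2 + z^2) ^ (-(1/2) : ℝ) := by
  rw [Omega, Real.sqrt_eq_rpow, Real.rpow_neg (by positivity)]
  ring

theorem hasDerivAt_Omega_x (μ x y z : ℝ) (h : 0 < x^2 + y^2 + z^2) :
    HasDerivAt (fun s => Omega μ s y z)
      (lam2 μ * x - x * (x^2 + y^2 + z^2) ^ (-(3/2) : ℝ)) x := by
  have hf : (fun s => Omega μ s y z) = fun s =>
      (1/2) * (lam2 μ * s^2 + (lam1 μ * y^2 - z^2)) + (s^2 + (y^2 + z^2)) ^ (-(1/2) : ℝ) := by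
    ext s; rw [Omega_eq_rpow]; ring_nf
  rw [hf]
  refine ((((hasDerivAt_pow 2 x).const_mul _).add_const _).const_mul _).add
    (hasDerivAt_sq_add_rpow _ _ x (by rw [← add_assoc]; exact h.ne')) |>.congr_deriv ?_
  rw [show (-(1/2) : ℝ) - 1 = -(3/2) by norm_num, add_assoc]; push_cast; ring

theorem hasDerivAt_Omega_y (μ x y z : ℝ) (h : 0 < x^2 + y^2 + z^2) :
    HasDerivAt (fun s => Omega μ x s z)
      (lam1 μ * y - y * (x^2 + y^2 + z^2) ^ (-(3/2) : ℝ)) y := by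
  have hf : (fun s => Omega μ x s z) = fun s =>
      (1/2) * (lam1 μ * s^2 + (lam2 μ * x^2 - z^2)) + (s^2 + (x^2 + z^2)) ^ (-(1/2) : ℝ) := by
    ext s; rw [Omega_eq_rpow]; ring_nf
  have hq : x^2 + y^2 + z^2 = y^2 + (x^2 + z^2) := by ring
  rw [hf, hq]
  refine ((((hasDerivAt_pow 2 y).const_mul _).add_const _).const_mul _).add
    (hasDerivAt_sq_add_rpow _ _ y (by rw [← hq]; exact h.ne')) |>.congr_deriv ?_
  rw [show (-(1/2) : ℝ) - 1 = -(3/2) by norm_num]; push_cast; ring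

theorem Omegaxx_eq (μ x y z : ℝ) (h : 0 < x^2 + y^2 + z^2) :
    Omegaxx μ x y z = lam2 μ - (x^2 + y^2 + z^2) ^ (-(3/2) : ℝ)
      + 3 * x^2 * (x^2 + y^2 + z^2) ^ (-(5/2) : ℝ) := by
  rw [add_assoc] at h ⊢
  have hev : (fun s => Omegax μ s y z) =ᶠ[𝓝 x]
      fun s => lam2 μ * s - s * (s^2 + (y^2 + z^2)) ^ (-(3/2) : ℝ) :=
    (eventually_sq_add_pos h).mono fun s hs =>
      (hasDerivAt_Omega_x μ s y z (by rwa [add_assoc])).deriv.trans (by rw [add_assoc])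
  rw [Omegaxx, hev.deriv_eq]
  refine (((hasDerivAt_id x).const_mul _).sub
    (hasDerivAt_mul_sq_add_rpow _ _ x h.ne')).deriv.trans ?_
  rw [show (-(3/2) : ℝ) - 1 = -(5/2) by norm_num]; ring

theorem Omegayy_eq (μ x y z : ℝ) (h : 0 < x^2 + y^2 + z^2) :
    Omegayy μ x y z = lam1 μ - (x^2 + y^2 + z^2) ^ (-(3/2) : ℝ)
      + 3 * y^2 * (x^2 + y^2 + z^2) ^ (-(5/2) : ℝ) := by
  have hq : ∀ s, x^2 + s^2 + z^2 = s^2 + (x^2 + z^2) := fun s => by ring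
  rw [hq] at h ⊢
  have hev : (fun s => Omegay μ x s z) =ᶠ[𝓝 y]
      fun s => lam1 μ * s - s * (s^2 + (x^2 + z^2)) ^ (-(3/2) : ℝ) :=
    (eventually_sq_add_pos h).mono fun s hs =>
      (hasDerivAt_Omega_y μ x s z (by rwa [hq])).deriv.trans (by rw [hq])
  rw [Omegayy, hev.deriv_eq]
  refine (((hasDerivAt_id y).const_mul _).sub
    (hasDerivAt_mul_sq_add_rpow _ _ y h.ne')).deriv.trans ?_
  rw [show (-(3/2) : ℝ) - 1 = -(5/2) by norm_num]; ring

theorem Omegaxy_eq (μ x y z : ℝ) (h : 0 < x^2 + y^2 + z^2) :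
    Omegaxy μ x y z = 3 * x * y * (x^2 + y^2 + z^2) ^ (-(5/2) : ℝ) := by
  have hq : ∀ s, x^2 + s^2 + z^2 = s^2 + (x^2 + z^2) := fun s => by ring
  rw [hq] at h ⊢
  have hev : (fun s => Omegax μ x s z) =ᶠ[𝓝 y]
      fun s => lam2 μ * x - x * (s^2 + (x^2 + z^2)) ^ (-(3/2) : ℝ) :=
    (eventually_sq_add_pos h).mono fun s hs =>
      (hasDerivAt_Omega_x μ x s z (by rwa [hq])).deriv.trans (by rw [hq])
  rw [Omegaxy, hev.deriv_eq]
  refine ((hasDerivAt_const y _).sub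
    ((hasDerivAt_sq_add_rpow _ _ y h.ne').const_mul x)).deriv.trans ?_
  rw [show (-(3/2) : ℝ) - 1 = -(5/2) by norm_num]; ring

theorem sq_rpow_neg_three_halves {a x : ℝ} (ha : 0 < a) (hx : |x| = a ^ (-(1:ℝ)/3)) :
    (x^2) ^ (-(3/2) : ℝ) = a := by
  rw [← sq_abs, hx, ← Real.rpow_natCast, ← Real.rpow_mul ha.le, ← Real.rpow_mul ha.le]
  norm_num

theorem dparam_pos (μ : ℝ) : 0 < dparam μ :=
  Real.sqrt_pos.mpr (by nlinarith [sq_nonneg (μ - 1/2)])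

theorem lam2_pos (μ : ℝ) : 0 < lam2 μ := by
  have := dparam_pos μ
  rw [lam2]; positivity

theorem Bcoef_neg (μ : ℝ) : Bcoef μ < 0 := by
  have hd := dparam_pos μ
  have h2 := lam2_pos μ
  have : lam1 μ - lam2 μ = -3 * dparam μ := by rw [lam1, lam2]; ring
  rw [Bcoef, this]; nlinarith

theorem hessian_Omega_of_abs_eq (μ x : ℝ) (hx : |x| = lam2 μ ^ (-(1:ℝ)/3)) :
    Omegaxx μ x 0 0 = 3 * lam2 μ ∧ Omegayy μ x 0 0 = lam1 μ - lam2 μ ∧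
      Omegaxy μ x 0 0 = 0 := by
  have hlam := lam2_pos μ
  have hx0 : x ≠ 0 := abs_pos.mp (hx ▸ Real.rpow_pos_of_pos hlam _)
  have hq : 0 < x^2 + 0^2 + 0^2 := by positivity
  have h3 : (x^2) ^ (-(3/2) : ℝ) = lam2 μ := sq_rpow_neg_three_halves hlam hx
  have h5 : x^2 * (x^2) ^ (-(5/2) : ℝ) = lam2 μ := by
    rw [← Real.rpow_one_add' (sq_nonneg x) (by norm_num), ← h3]; norm_num
  have hq' : x^2 + 0^2 + 0^2 = x^2 := by ring
  refine ⟨?_, ?_, ?_⟩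
  · rw [Omegaxx_eq μ x 0 0 hq, hq', mul_assoc, h5, h3]; ring
  · rw [Omegayy_eq μ x 0 0 hq, hq', h3]; ring
  · rw [Omegaxy_eq μ x 0 0 hq]; ring

def saddleExponent (a b : ℝ) : ℝ := √((√(a^2 - 4*b) - a) / 2)

def centerFrequency (a b : ℝ) : ℝ := √((a + √(a^2 - 4*b)) / 2)

section Biquadratic

variable {a b : ℝ}

theorem abs_lt_sqrt_sq_sub (hb : b < 0) : |a| < √(a^2 - 4*b) :=
  Real.lt_sqrt (abs_nonneg a) |>.mpr (by rw [sq_abs]; linarith)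

theorem saddleExponent_sq (hb : b < 0) : saddleExponent a b ^ 2 = (√(a^2 - 4*b) - a) / 2 :=
  Real.sq_sqrt (by linarith [le_abs_self a, abs_lt_sqrt_sq_sub (a := a) hb])

theorem centerFrequency_sq (hb : b < 0) : centerFrequency a b ^ 2 = (a + √(a^2 - 4*b)) / 2 :=
  Real.sq_sqrt (by linarith [neg_abs_le a, abs_lt_sqrt_sq_sub (a := a) hb])

theorem saddleExponent_pos (hb : b < 0) : 0 < saddleExponent a b :=
  Real.sqrt_pos.mpr (by linarith [le_abs_self a, abs_lt_sqrt_sq_sub (a := a) hb])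

theorem centerFrequency_pos (hb : b < 0) : 0 < centerFrequency a b :=
  Real.sqrt_pos.mpr (by linarith [neg_abs_le a, abs_lt_sqrt_sq_sub (a := a) hb])

theorem setOf_quartic_eq_zero (L W : ℂ) :
    {η : ℂ | η^4 + (W^2 - L^2) * η^2 - L^2 * W^2 = 0} = {L, -L, I * W, -(I * W)} := by
  ext η
  have hfac : η^4 + (W^2 - L^2) * η^2 - L^2 * W^2
      = (η - L) * (η + L) * (η - I * W) * (η + I * W) := by
    linear_combination (W^2 * η^2 - L^2 * W^2) * I_sq
  change _ = 0 ↔ _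
  simp only [hfac, Set.mem_insert_iff, Set.mem_singleton_iff, mul_eq_zero, sub_eq_zero,
    add_eq_zero_iff_eq_neg, or_assoc]

theorem setOf_biquadratic_eq_zero (hb : b < 0) :
    {η : ℂ | η^4 + (a : ℂ) * η^2 + (b : ℂ) = 0}
      = {(saddleExponent a b : ℂ), -(saddleExponent a b : ℂ),
         I * (centerFrequency a b : ℂ), -(I * (centerFrequency a b : ℂ))} := by
  set L := saddleExponent a b
  set W := centerFrequency a b
  have hD : √(a^2 - 4*b) ^ 2 = a^2 - 4*b := Real.sq_sqrt (by nlinarith)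
  have ha : (a : ℂ) = (W : ℂ)^2 - (L : ℂ)^2 := by
    exact_mod_cast (show a = W^2 - L^2 by rw [saddleExponent_sq hb, centerFrequency_sq hb]; ring)
  have hb' : (b : ℂ) = -((L : ℂ)^2 * (W : ℂ)^2) := by
    exact_mod_cast (show b = -(L^2 * W^2) by
      rw [saddleExponent_sq hb, centerFrequency_sq hb]; linear_combination hD / 4)
  have hpoly : ∀ η : ℂ, η^4 + (a : ℂ) * η^2 + (b : ℂ)
      = η^4 + ((W : ℂ)^2 - (L : ℂ)^2) * η^2 - (L : ℂ)^2 * (W : ℂ)^2 := fun η => by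
    rw [ha, hb']; ring
  simp only [hpoly]
  exact setOf_quartic_eq_zero _ _

end Biquadratic

theorem L1_L2_saddle_center_general (μ : ℝ) :
    Omegaxx μ (lam2 μ ^ (-(1:ℝ)/3)) 0 0 = 3 * lam2 μ ∧
    Omegayy μ (lam2 μ ^ (-(1:ℝ)/3)) 0 0 = lam1 μ - lam2 μ ∧
    Omegaxy μ (lam2 μ ^ (-(1:ℝ)/3)) 0 0 = 0 ∧
    Omegaxx μ (-(lam2 μ ^ (-(1:ℝ)/3))) 0 0 = 3 * lam2 μ ∧
    Omegayy μ (-(lam2 μ ^ (-(1:ℝ)/3))) 0 0 = lam1 μ - lam2 μ ∧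
    Omegaxy μ (-(lam2 μ ^ (-(1:ℝ)/3))) 0 0 = 0 ∧
    Bcoef μ < 0 ∧
    Dcoef μ > (Acoef μ)^2 ∧ (Acoef μ)^2 ≥ 0 ∧
    0 < LambdaL1 μ ∧ 0 < omegaL1 μ ∧
    {η : ℂ | η^4 - ((2 * lam2 μ + lam1 μ - 4 : ℝ) : ℂ) * η^2
        + ((3 * lam2 μ * (lam1 μ - lam2 μ) : ℝ) : ℂ) = 0}
      = {((LambdaL1 μ : ℝ) : ℂ), -((LambdaL1 μ : ℝ) : ℂ),
         Complex.I * ((omegaL1 μ : ℝ) : ℂ), -(Complex.I * ((omegaL1 μ : ℝ) : ℂ))} := by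
  have hr : |lam2 μ ^ (-(1:ℝ)/3)| = lam2 μ ^ (-(1:ℝ)/3) :=
    abs_of_pos (Real.rpow_pos_of_pos (lam2_pos μ) _)
  obtain ⟨hxx₁, hyy₁, hxy₁⟩ := hessian_Omega_of_abs_eq μ _ hr
  obtain ⟨hxx₂, hyy₂, hxy₂⟩ := hessian_Omega_of_abs_eq μ _ ((abs_neg _).trans hr)
  have hB := Bcoef_neg μ
  have hpoly : ∀ η : ℂ, η^4 - ((2 * lam2 μ + lam1 μ - 4 : ℝ) : ℂ) * η^2
      + ((3 * lam2 μ * (lam1 μ - lam2 μ) : ℝ) : ℂ) = η^4 + (Acoef μ : ℂ) * η^2 + (Bcoef μ : ℂ) :=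
    fun η => by simp only [Acoef, Bcoef]; push_cast; ring
  refine ⟨hxx₁, hyy₁, hxy₁, hxx₂, hyy₂, hxy₂, hB, by rw [Dcoef]; linarith, sq_nonneg _,
    saddleExponent_pos hB, centerFrequency_pos hB, ?_⟩
  simp only [hpoly]
  exact setOf_biquadratic_eq_zero hB

/-- For every `μ ∈ [0,1/2]` the equilibrium points `L₁ = (λ₂^{−1/3},0,0)` and
`L₂ = (−λ₂^{−1/3},0,0)` are of saddle × center type in the plane: there
`Ω_xx = 3λ₂`, `Ω_yy = λ₁ − λ₂`, `Ω_xy = 0`; moreover `B < 0`, `D > A² ≥ 0`, and the planar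
characteristic polynomial `η⁴ − (2λ₂ + λ₁ − 4)η² + 3λ₂(λ₁ − λ₂)` has, over `ℂ`, exactly
the roots `{Λ, −Λ, iω, −iω}` with `Λ, ω > 0`. -/
theorem L1_L2_saddle_center (μ : ℝ) (hμ : μ ∈ Set.Icc (0:ℝ) (1/2)) :
    Omegaxx μ (lam2 μ ^ (-(1:ℝ)/3)) 0 0 = 3 * lam2 μ ∧
    Omegayy μ (lam2 μ ^ (-(1:ℝ)/3)) 0 0 = lam1 μ - lam2 μ ∧
    Omegaxy μ (lam2 μ ^ (-(1:ℝ)/3)) 0 0 = 0 ∧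
    Omegaxx μ (-(lam2 μ ^ (-(1:ℝ)/3))) 0 0 = 3 * lam2 μ ∧
    Omegayy μ (-(lam2 μ ^ (-(1:ℝ)/3))) 0 0 = lam1 μ - lam2 μ ∧
    Omegaxy μ (-(lam2 μ ^ (-(1:ℝ)/3))) 0 0 = 0 ∧
    Bcoef μ < 0 ∧
    Dcoef μ > (Acoef μ)^2 ∧ (Acoef μ)^2 ≥ 0 ∧
    0 < LambdaL1 μ ∧ 0 < omegaL1 μ ∧
    {η : ℂ | η^4 - ((2 * lam2 μ + lam1 μ - 4 : ℝ) : ℂ) * η^2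
        + ((3 * lam2 μ * (lam1 μ - lam2 μ) : ℝ) : ℂ) = 0}
      = {((LambdaL1 μ : ℝ) : ℂ), -((LambdaL1 μ : ℝ) : ℂ),
         Complex.I * ((omegaL1 μ : ℝ) : ℂ), -(Complex.I * ((omegaL1 μ : ℝ) : ℂ))} :=
  L1_L2_saddle_center_general μ
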